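/- For all constants μ > 0, c₁ > 0, c₂ > 0, the equation ln((1-B)/(1+B)) + 2B/(1-B²) = 2μ²c₂/c₁ has exactly one solution B in the open interval (0,1). -/

import Mathlib

/-!
The left-hand side vanishes at `0` and has derivative `4B² / (1 - B²)² > 0` on `(0, 1)`.
With `s = (1 - B)⁻¹` it equals `s - log s` up to a term that stays bounded as `B → 1⁻`, so it
tends to `+∞` there. Since the right-hand side is positive, continuity and strict monotonicity
give exactly one solution.
-/

open Real Set Filter Topology

theorem existsUnique_mem_Ioo_eq_of_tendsto_atTop {α δ : Type*}
    [ConditionallyCompleteLinearOrder α] [TopologicalSpace α] [OrderTopology α]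
    [DenselyOrdered α] [LinearOrder δ] [TopologicalSpace δ] [OrderClosedTopology δ]
    {f : α → δ} {a b : α} {y : δ} (hab : a < b)
    (hcont : ContinuousOn f (Ico a b)) (hmono : StrictMonoOn f (Ico a b))
    (htop : Tendsto f (𝓝[<] b) atTop) (hy : f a < y) :
    ∃! x, x ∈ Ioo a b ∧ f x = y := by
  have : (𝓝[<] b).NeBot := nhdsLT_neBot_of_exists_lt ⟨a, hab⟩
  obtain ⟨c, ⟨hac, hcb⟩, hyc⟩ :=
    (Filter.Eventually.and (Ioo_mem_nhdsLT hab) (htop.eventually (eventually_ge_atTop y))).exists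
  have hsub : Icc a c ⊆ Ico a b := Icc_subset_Ico_right hcb
  obtain ⟨x, ⟨hax, hxc⟩, hfx⟩ :=
    intermediate_value_Icc hac.le (hcont.mono hsub) ⟨hy.le, hyc⟩
  have hxa : a ≠ x := by rintro rfl; exact hy.ne hfx
  refine ⟨x, ⟨⟨lt_of_le_of_ne hax hxa, hxc.trans_lt hcb⟩, hfx⟩, ?_⟩
  rintro x' ⟨hx', hfx'⟩
  exact hmono.injOn (Ioo_subset_Ico_self hx') (hsub ⟨hax, hxc⟩) (hfx'.trans hfx.symm)

theorem tendsto_sub_log_atTop : Tendsto (fun s => s - log s) atTop atTop := by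
  refine tendsto_atTop_mono' atTop ?_ (tendsto_id.atTop_div_const two_pos)
  filter_upwards [isLittleO_log_id_atTop.bound (half_pos one_pos), eventually_ge_atTop 0]
    with s hlog hs
  rw [norm_eq_abs, norm_eq_abs, id, abs_of_nonneg hs] at hlog
  rw [id]
  linarith [le_abs_self (log s)]

noncomputable def eqBLhs (x : ℝ) : ℝ := log ((1 - x) / (1 + x)) + 2 * x / (1 - x ^ 2)

theorem eqBLhs_zero : eqBLhs 0 = 0 := by simp [eqBLhs]

theorem hasDerivAt_eqBLhs {x : ℝ} (h₁ : -1 < x) (h₂ : x < 1) :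
    HasDerivAt eqBLhs (4 * x ^ 2 / (1 - x ^ 2) ^ 2) x := by
  have hm : 0 < 1 - x := by linarith
  have hp : 0 < 1 + x := by linarith
  have hq : 0 < 1 - x ^ 2 := by nlinarith
  have hratio : HasDerivAt (fun y => (1 - y) / (1 + y)) (-2 / (1 + x) ^ 2) x :=
    ((hasDerivAt_id' x).const_sub 1).fun_div ((hasDerivAt_id' x).const_add 1) hp.ne'
      |>.congr_deriv (by ring)
  have hfrac : HasDerivAt (fun y => 2 * y / (1 - y ^ 2)) (2 * (1 + x ^ 2) / (1 - x ^ 2) ^ 2) x :=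
    ((hasDerivAt_id' x).const_mul 2).fun_div ((hasDerivAt_pow 2 x).const_sub 1) hq.ne'
      |>.congr_deriv (by norm_num; ring)
  refine ((hratio.log (div_pos hm hp).ne').add hfrac).congr_deriv ?_
  field_simp
  ring

theorem continuousOn_eqBLhs : ContinuousOn eqBLhs (Ico 0 1) := fun x hx =>
  (hasDerivAt_eqBLhs (by linarith [hx.1]) hx.2).continuousAt.continuousWithinAt

theorem strictMonoOn_eqBLhs : StrictMonoOn eqBLhs (Ico 0 1) := by
  refine strictMonoOn_of_hasDerivWithinAt_pos (convex_Ico 0 1) continuousOn_eqBLhs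
    (f' := fun x => 4 * x ^ 2 / (1 - x ^ 2) ^ 2) (fun x hx => ?_) (fun x hx => ?_)
  · rw [interior_Ico] at hx
    exact (hasDerivAt_eqBLhs (by linarith [hx.1]) hx.2).hasDerivWithinAt
  · rw [interior_Ico] at hx
    have : 0 < 1 - x ^ 2 := by nlinarith [hx.1, hx.2]
    have : x ≠ 0 := hx.1.ne'
    positivity

theorem eqBLhs_eq_sub_log_sub {x : ℝ} (h₁ : -1 < x) (h₂ : x < 1) :
    eqBLhs x = ((1 - x)⁻¹ - log (1 - x)⁻¹) - (log (1 + x) + (1 + x)⁻¹) := by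
  have hm : 0 < 1 - x := by linarith
  have hp : 0 < 1 + x := by linarith
  have hq : 1 - x ^ 2 = (1 - x) * (1 + x) := by ring
  rw [eqBLhs, log_div hm.ne' hp.ne', log_inv, hq]
  field_simp
  ring

theorem tendsto_eqBLhs_nhdsLT_one : Tendsto eqBLhs (𝓝[<] 1) atTop := by
  have hinv : Tendsto (fun x : ℝ => (1 - x)⁻¹) (𝓝[<] 1) atTop := by
    refine tendsto_inv_nhdsGT_zero.comp
      (tendsto_nhdsWithin_of_tendsto_nhds_of_eventually_within _ ?_ ?_)
    · simpa using ((continuous_sub_left (1 : ℝ)).tendsto 1).mono_left nhdsWithin_le_nhds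
    · filter_upwards [self_mem_nhdsWithin] with x (hx : x < 1) using sub_pos.2 hx
  have hrest :
      Tendsto (fun x : ℝ => log (1 + x) + (1 + x)⁻¹) (𝓝[<] 1) (𝓝 (log 2 + 2⁻¹)) := by
    refine (ContinuousAt.tendsto ?_).mono_left nhdsWithin_le_nhds |>.trans_eq (by norm_num)
    fun_prop (disch := norm_num)
  refine ((tendsto_sub_log_atTop.comp hinv).atTop_add hrest.neg).congr' ?_
  filter_upwards [Ioo_mem_nhdsLT (show (-1 : ℝ) < 1 by norm_num)] with x hx
  rw [eqBLhs_eq_sub_log_sub hx.1 hx.2]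
  rfl

theorem eqB_existsUnique (μ c₁ c₂ : ℝ) (hμ : 0 < μ) (hc₁ : 0 < c₁) (hc₂ : 0 < c₂) :
    ∃! B : ℝ, B ∈ Set.Ioo (0 : ℝ) 1 ∧
      Real.log ((1 - B) / (1 + B)) + 2 * B / (1 - B ^ 2) = 2 * μ ^ 2 * c₂ / c₁ :=
  existsUnique_mem_Ioo_eq_of_tendsto_atTop (f := eqBLhs) one_pos continuousOn_eqBLhs
    strictMonoOn_eqBLhs tendsto_eqBLhs_nhdsLT_one (by rw [eqBLhs_zero]; positivity)
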